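/- For g ∈ G, i ∈ ℕ and n ∈ ℤ with n + i ≥ 0, set T(g,i,n) := (S*)^i U_g S^{n+i} ∈ B(ℓ²(G)). Then: (a) T(g,i,n) = T(φ(g), i+1, n), so T(g,i,n) depends only on the class [g,i] ∈ 𝔾 and on n; (b) T(g,i,n)* = T(g^{-1}, n+i, −n); (c) for all g, h ∈ G, i, j ∈ ℕ and n, m ∈ ℤ with n+i ≥ 0 and m+j ≥ 0, T(g,i,n)·T(h,j,m)·T(h,j,m)* = T(φ^j(g)·φ^{i+n}(h), i+j, n+m)·T(h,j,m)*. Thus the assignment ([g,i], n) ↦ (S*)^i U_g S^{n+i} is a well-defined partial representation of the group S̄ = 𝔾 ⋊_{φ̄} ℤ on ℓ²(G). -/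

import Mathlib

/-- `ℓ²(G)`. -/
noncomputable abbrev l2 (G : Type*) := lp (fun _ : G => ℂ) 2

/-- The orthonormal basis vector `ξ_h ∈ ℓ²(G)`. -/
noncomputable def xi (G : Type*) [DecidableEq G] (h : G) : l2 G := lp.single 2 h (1 : ℂ)

/-- `φ^n(G)` as a subgroup of `G`. -/
def rng {G : Type*} [Group G] (φ : Monoid.End G) (n : ℕ) : Subgroup G :=
  MonoidHom.range ((φ ^ n : Monoid.End G) : G →* G)

/-- The operator `T(g,i,n) = (S*)^i U_g S^{n+i}` (for `n + i ≥ 0`). -/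
noncomputable def T {G : Type*} (U : G → (l2 G →L[ℂ] l2 G)) (S : l2 G →L[ℂ] l2 G)
    (g : G) (i : ℕ) (n : ℤ) : l2 G →L[ℂ] l2 G :=
  (star S) ^ i * U g * S ^ (n + (i : ℤ)).toNat

/-!
An operator `A` on `ℓ²(α)` with `A ξ_x = ξ_{f x}` for an injective `f` has adjoint
`A* ξ_{f x} = ξ_x` and `A* ξ_y = 0` for `y ∉ f(α)`. Applied to `U_g` and to the powers of `S`,
this shows that `T(g,i,n)` maps `ξ_x` to `(S*)^i ξ_{g φ^{n+i}(x)}`, which is `ξ_y` if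
`φ^i(y) = g φ^{n+i}(x)` and `0` if there is no such `y`. Every identity is then checked on the
basis vectors, where it reduces to an identity in `G` obtained from `φ` being a homomorphism.
-/

open Function

namespace l2

variable {α : Type*} [DecidableEq α]

lemma xi_apply (x y : α) : (xi α x : α → ℂ) y = if y = x then 1 else 0 := by
  rw [xi, lp.single_apply, Pi.single_apply]

lemma inner_xi_left (y : α) (u : l2 α) : inner ℂ (xi α y) u = u y := by
  simp [xi, lp.inner_single_left]

lemma star_apply_apply (A : l2 α →L[ℂ] l2 α) (u : l2 α) (y : α) :
    (star A u : α → ℂ) y = inner ℂ (A (xi α y)) u := by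
  rw [← inner_xi_left, ContinuousLinearMap.star_eq_adjoint,
    ContinuousLinearMap.adjoint_inner_right]

lemma ext_xi {A B : l2 α →L[ℂ] l2 α} (h : ∀ x, A (xi α x) = B (xi α x)) : A = B := by
  refine ContinuousLinearMap.ext fun u => ?_
  have hu := lp.hasSum_single (E := fun _ : α => ℂ) (p := 2) (by norm_num) u
  have hsingle : ∀ x, lp.single 2 x (u x) = u x • xi α x := fun x => by
    rw [xi, ← lp.single_smul, smul_eq_mul, mul_one]
  simp only [hsingle] at hu
  have hA := hu.mapL A
  have hB := hu.mapL B
  simp only [map_smul, h] at hA hB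
  exact hA.unique hB

variable {A : l2 α →L[ℂ] l2 α} {f : α → α} (hA : ∀ x, A (xi α x) = xi α (f x))
include hA

lemma pow_apply_xi (k : ℕ) (x : α) : (A ^ k) (xi α x) = xi α (f^[k] x) := by
  induction k generalizing x with
  | zero => rfl
  | succ k ih => rw [pow_succ, mul_apply_eq_comp, hA, ih, iterate_succ_apply]

lemma star_apply_xi_apply (hf : Injective f) (x : α) : star A (xi α (f x)) = xi α x := by
  ext y
  simp only [star_apply_apply, hA, inner_xi_left, xi_apply, hf.eq_iff]

lemma star_apply_xi_of_notMem_range {y : α} (hy : y ∉ Set.range f) : star A (xi α y) = 0 := by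
  ext z
  rw [star_apply_apply, hA, inner_xi_left, xi_apply, if_neg (fun h => hy ⟨z, h⟩)]
  rfl

end l2

open l2

section

variable {G : Type*} [Group G] [DecidableEq G] {φ : Monoid.End G}
  {U : G → (l2 G →L[ℂ] l2 G)} {S : l2 G →L[ℂ] l2 G}
  (hU : ∀ g h : G, U g (xi G h) = xi G (g * h)) (hS : ∀ h : G, S (xi G h) = xi G (φ h))

include hU in
lemma star_U (g : G) : star (U g) = U g⁻¹ := ext_xi fun x => by
  simpa [hU] using star_apply_xi_apply (hU g) (mul_right_injective g) (g⁻¹ * x)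

include hU in
lemma star_T (g : G) (i : ℕ) (n : ℤ) (hn : 0 ≤ n + (i : ℤ)) :
    star (T U S g i n) = T U S g⁻¹ (n + (i : ℤ)).toNat (-n) := by
  have hexp : (-n + ((n + (i : ℤ)).toNat : ℤ)).toNat = i := by omega
  rw [T, T, hexp, star_mul, star_mul, star_pow, star_pow, star_star, star_U hU, mul_assoc]

section powers

include hS

lemma S_pow_apply_xi (k : ℕ) (x : G) : (S ^ k) (xi G x) = xi G ((φ ^ k) x) :=
  pow_apply_xi hS k x

lemma star_S_pow_apply_xi_map_pow (hinj : Injective φ) (k : ℕ) (x : G) :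
    (star S ^ k) (xi G ((φ ^ k) x)) = xi G x := by
  rw [← star_pow]
  exact star_apply_xi_apply (S_pow_apply_xi hS k) (hinj.iterate k) x

lemma star_S_pow_apply_xi_of_notMem_range (k : ℕ) {y : G} (hy : y ∉ Set.range (φ ^ k)) :
    (star S ^ k) (xi G y) = 0 := by
  rw [← star_pow]
  exact star_apply_xi_of_notMem_range (S_pow_apply_xi hS k) hy

end powers

include hU hS

lemma T_apply_xi (g : G) (i : ℕ) (n : ℤ) (x : G) :
    T U S g i n (xi G x) = (star S ^ i) (xi G (g * (φ ^ (n + (i : ℤ)).toNat) x)) := by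
  rw [T, mul_apply_eq_comp, mul_apply_eq_comp, S_pow_apply_xi hS, hU]

lemma T_one_zero_zero : T U S (1 : G) 0 0 = 1 :=
  ext_xi fun x => by simp [T_apply_xi hU hS]

lemma T_eq_T_map_pow (hinj : Injective φ) (k : ℕ) (g : G) (i : ℕ) (n : ℤ)
    (hn : 0 ≤ n + (i : ℤ)) : T U S g i n = T U S ((φ ^ k) g) (i + k) n := by
  refine ext_xi fun x => ?_
  have hexp : (n + ((i + k : ℕ) : ℤ)).toNat = k + (n + (i : ℤ)).toNat := by omega
  rw [T_apply_xi hU hS, T_apply_xi hU hS, hexp, pow_add φ, Monoid.End.coe_mul, comp_apply,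
    ← map_mul, pow_add, mul_apply_eq_comp, star_S_pow_apply_xi_map_pow hS hinj]

lemma T_eq_of_map_pow_eq (hinj : Injective φ) {g h : G} {i j : ℕ} {n : ℤ}
    (hni : 0 ≤ n + (i : ℤ)) (hnj : 0 ≤ n + (j : ℤ)) (hgh : (φ ^ j) g = (φ ^ i) h) :
    T U S g i n = T U S h j n := by
  rw [T_eq_T_map_pow hU hS hinj j g i n hni, T_eq_T_map_pow hU hS hinj i h j n hnj, hgh,
    add_comm i j]

lemma T_mul_T_mul_star_T (hinj : Injective φ) (g h : G) (i j : ℕ) (n m : ℤ)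
    (hni : 0 ≤ n + (i : ℤ)) (hmj : 0 ≤ m + (j : ℤ)) :
    T U S g i n * T U S h j m * star (T U S h j m) =
      T U S ((φ ^ j) g * (φ ^ (n + (i : ℤ)).toNat) h) (i + j) (n + m) *
        star (T U S h j m) := by
  set a := (n + (i : ℤ)).toNat
  set b := (m + (j : ℤ)).toNat with hb
  have star_T_apply_xi : ∀ x,
      star (T U S h j m) (xi G x) = (star S ^ b) (xi G (h⁻¹ * (φ ^ j) x)) := fun x => by
    rw [star_T hU h j m hmj, T_apply_xi hU hS, show (-m + (b : ℤ)).toNat = j by omega]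
  refine ext_xi fun x => ?_
  simp only [mul_apply_eq_comp, star_T_apply_xi]
  by_cases hx : h⁻¹ * (φ ^ j) x ∈ Set.range (φ ^ b)
  · obtain ⟨w, hw⟩ := hx
    have hjx : (φ ^ j) x = h * (φ ^ b) w := by rw [hw, mul_inv_cancel_left]
    have hTw : T U S h j m (xi G w) = xi G x := by
      rw [T_apply_xi hU hS, ← hb, ← hjx, star_S_pow_apply_xi_map_pow hS hinj]
    have hmap : (φ ^ j) g * (φ ^ a) h * (φ ^ (a + b)) w = (φ ^ j) (g * (φ ^ a) x) := by
      rw [map_mul, pow_add φ, Monoid.End.coe_mul, comp_apply, mul_assoc, ← map_mul, ← hjx]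
      exact congrArg _ (DFunLike.congr_fun (pow_mul_comm φ a j) x)
    rw [← hw, star_S_pow_apply_xi_map_pow hS hinj, hTw, T_apply_xi hU hS, T_apply_xi hU hS,
      show (n + m + ((i + j : ℕ) : ℤ)).toNat = a + b by omega, hmap, pow_add (star S),
      mul_apply_eq_comp, star_S_pow_apply_xi_map_pow hS hinj]
  · simp only [star_S_pow_apply_xi_of_notMem_range hS b hx, map_zero]

end

theorem T_partial_representation_general (G : Type*) [Group G] [DecidableEq G]
    (φ : Monoid.End G) (hinj : Function.Injective φ)
    (U : G → (l2 G →L[ℂ] l2 G)) (S : l2 G →L[ℂ] l2 G)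
    (hU : ∀ g h : G, U g (xi G h) = xi G (g * h))
    (hS : ∀ h : G, S (xi G h) = xi G (φ h)) :
    (T U S (1 : G) 0 0 = 1) ∧
    (∀ (g : G) (i : ℕ) (n : ℤ), 0 ≤ n + (i : ℤ) →
      T U S g i n = T U S (φ g) (i + 1) n) ∧
    (∀ (g h : G) (i j : ℕ) (n : ℤ), 0 ≤ n + (i : ℤ) → 0 ≤ n + (j : ℤ) →
      (φ ^ j) g = (φ ^ i) h → T U S g i n = T U S h j n) ∧
    (∀ (g : G) (i : ℕ) (n : ℤ), 0 ≤ n + (i : ℤ) →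
      star (T U S g i n) = T U S g⁻¹ (n + (i : ℤ)).toNat (-n)) ∧
    (∀ (g h : G) (i j : ℕ) (n m : ℤ), 0 ≤ n + (i : ℤ) → 0 ≤ m + (j : ℤ) →
      T U S g i n * T U S h j m * star (T U S h j m) =
        T U S ((φ ^ j) g * (φ ^ (n + (i : ℤ)).toNat) h) (i + j) (n + m) *
          star (T U S h j m)) := by
  refine ⟨T_one_zero_zero hU hS, fun g i n hn => ?_,
    fun g h i j n hni hnj hgh => T_eq_of_map_pow_eq hU hS hinj hni hnj hgh, star_T hU,
    T_mul_T_mul_star_T hU hS hinj⟩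
  simpa using T_eq_T_map_pow hU hS hinj 1 g i n hn

/-- **Statement 9.** With `T(g,i,n) = (S*)^i U_g S^{n+i}` for `n + i ≥ 0`:
(PR1) `T(e,0,0) = 1`;
(a) `T(g,i,n) = T(φ(g),i+1,n)`, and more generally `T(g,i,n)` only depends on the class
`[g,i] ∈ 𝔾` (i.e. on `(g,i)` up to `φ^j(g) = φ^i(h)`) and on `n`;
(b) `T(g,i,n)* = T(g⁻¹, n+i, −n)`;
(c) `T(g,i,n)·T(h,j,m)·T(h,j,m)* = T(φ^j(g)·φ^{i+n}(h), i+j, n+m)·T(h,j,m)*`.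
Thus `([g,i],n) ↦ (S*)^i U_g S^{n+i}` is a well-defined partial representation of the
group `S̄ = 𝔾 ⋊_{φ̄} ℤ` on `ℓ²(G)`. -/
theorem T_partial_representation (G : Type*) [Group G] [DecidableEq G]
    (φ : Monoid.End G) (hinj : Function.Injective φ) (hfin : Finite (G ⧸ rng φ 1))
    (U : G → (l2 G →L[ℂ] l2 G)) (S : l2 G →L[ℂ] l2 G)
    (hU : ∀ g h : G, U g (xi G h) = xi G (g * h))
    (hS : ∀ h : G, S (xi G h) = xi G (φ h)) :
    (T U S (1 : G) 0 0 = 1) ∧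
    (∀ (g : G) (i : ℕ) (n : ℤ), 0 ≤ n + (i : ℤ) →
      T U S g i n = T U S (φ g) (i + 1) n) ∧
    (∀ (g h : G) (i j : ℕ) (n : ℤ), 0 ≤ n + (i : ℤ) → 0 ≤ n + (j : ℤ) →
      (φ ^ j) g = (φ ^ i) h → T U S g i n = T U S h j n) ∧
    (∀ (g : G) (i : ℕ) (n : ℤ), 0 ≤ n + (i : ℤ) →
      star (T U S g i n) = T U S g⁻¹ (n + (i : ℤ)).toNat (-n)) ∧
    (∀ (g h : G) (i j : ℕ) (n m : ℤ), 0 ≤ n + (i : ℤ) → 0 ≤ m + (j : ℤ) →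
      T U S g i n * T U S h j m * star (T U S h j m) =
        T U S ((φ ^ j) g * (φ ^ (n + (i : ℤ)).toNat) h) (i + j) (n + m) *
          star (T U S h j m)) :=
  T_partial_representation_general G φ hinj U S hU hS
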